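/- arXiv:0810.0347 — 7 statements merged into one kernel-verified Lean document; each statement's English description precedes it below -/
import Mathlib

section
/- For every r ∈ (0,1), every ρ > 0 and every x ≥ 0, one has H_{r,ρ}(x) ≥ 0, where H_{r,ρ}(x) = (√(2ρ/π) / ∏_{n=0}^∞ (1 − r^{2n+1})) · Σ_{n=0}^∞ (r^{−2n} / ∏_{k=1}^{n} (1 − r^{−2k})) · exp(−ρ r^{−2n} x²/2). (Note that the summands alternate in sign, so nonnegativity of the sum is not termwise.) -/
/-!
With `q = r²` and `y = ρx²/2` the series is `∑ₙ (-1)ⁿ q^(n choose 2) / (q; q)ₙ · exp (-y / qⁿ)`.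
Its truncations, reweighted by `(q; q)_M / (q; q)_{M-n} → 1`, are `(q; q)_M` times the density
of `E₀ + ⋯ + E_M` with independent `Eₙ ~ Exp(q⁻ⁿ)`, written in partial fractions. Nonnegativity
of these densities follows by induction on `M`: the density for `M + 1` vanishes at `0` (a
`q`-binomial identity) and satisfies `F' = q^-(M+1) (F_M - F)`, so `exp (q^-(M+1) y) F` is
nondecreasing. Dominated convergence, with the summable majorant `q^(n choose 2) / (q; q)ₙ`,
passes to the limit.
-/

noncomputable def psi (r : ℝ) : ℝ :=
  Real.sqrt (2 / Real.pi) * ∏' n : ℕ, (1 - r ^ (2 * n + 2)) / (1 - r ^ (2 * n + 1))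

noncomputable def H (r ρ x : ℝ) : ℝ :=
  (Real.sqrt (2 * ρ / Real.pi) / ∏' n : ℕ, (1 - r ^ (2 * n + 1))) *
    ∑' n : ℕ,
      (r ^ (-(2 * (n : ℤ))) / ∏ k ∈ Finset.Icc 1 n, (1 - r ^ (-(2 * (k : ℤ))))) *
        Real.exp (-ρ * r ^ (-(2 * (n : ℤ))) * x ^ 2 / 2)

open Finset Filter Real Topology

lemma Nat.add_one_choose_two (n : ℕ) : (n + 1).choose 2 = n.choose 2 + n := by
  simp [Nat.choose_succ_succ, add_comm]

/-- The `q`-Pochhammer symbol `(q; q)_m`. -/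
noncomputable def qPochhammer (q : ℝ) (m : ℕ) : ℝ := ∏ k ∈ Icc 1 m, (1 - q ^ k)

section qPochhammer

variable {q : ℝ}

@[simp] lemma qPochhammer_zero (q : ℝ) : qPochhammer q 0 = 1 := by simp [qPochhammer]

lemma qPochhammer_succ (q : ℝ) (m : ℕ) :
    qPochhammer q (m + 1) = qPochhammer q m * (1 - q ^ (m + 1)) := by
  rw [qPochhammer, qPochhammer, prod_Icc_succ_top (Nat.le_add_left 1 m)]

lemma qPochhammer_add (q : ℝ) (m n : ℕ) :
    qPochhammer q (m + n) = qPochhammer q m * ∏ j ∈ range n, (1 - q ^ (m + j + 1)) := by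
  induction n with
  | zero => simp
  | succ n ih => rw [← add_assoc, qPochhammer_succ, ih, prod_range_succ, mul_assoc]

lemma one_sub_pow_pos (hq0 : 0 ≤ q) (hq1 : q < 1) {k : ℕ} (hk : k ≠ 0) : 0 < 1 - q ^ k :=
  sub_pos.2 (pow_lt_one₀ hq0 hq1 hk)

lemma qPochhammer_pos (hq0 : 0 ≤ q) (hq1 : q < 1) (m : ℕ) : 0 < qPochhammer q m :=
  prod_pos fun k hk => one_sub_pow_pos hq0 hq1 (by have := (mem_Icc.1 hk).1; omega)

lemma qPochhammer_antitone (hq0 : 0 ≤ q) (hq1 : q < 1) : Antitone (qPochhammer q) :=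
  antitone_nat_of_succ_le fun m => by
    rw [qPochhammer_succ]
    exact mul_le_of_le_one_right (qPochhammer_pos hq0 hq1 m).le (sub_le_self _ (pow_nonneg hq0 _))

lemma tendsto_qPochhammer_div_qPochhammer_sub (hq0 : 0 ≤ q) (hq1 : q < 1) (n : ℕ) :
    Tendsto (fun N => qPochhammer q N / qPochhammer q (N - n)) atTop (𝓝 1) := by
  have hfactor : ∀ j ∈ range n, Tendsto (fun N => 1 - q ^ (N - n + j + 1)) atTop (𝓝 1) :=
    fun j _ => by
      simpa [add_assoc] using tendsto_const_nhds.sub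
        ((tendsto_pow_atTop_nhds_zero_of_lt_one hq0 hq1).comp
          ((tendsto_add_atTop_nat (j + 1)).comp (tendsto_sub_atTop_nat n)))
  have hprod := tendsto_finsetProd (range n) hfactor
  rw [prod_const_one] at hprod
  refine hprod.congr' ?_
  filter_upwards [eventually_ge_atTop n] with N hN
  rw [eq_div_iff (qPochhammer_pos hq0 hq1 _).ne', mul_comm, ← qPochhammer_add,
    Nat.sub_add_cancel hN]

lemma summable_pow_choose_two_div_qPochhammer (hq0 : 0 < q) (hq1 : q < 1) :
    Summable fun n : ℕ => q ^ n.choose 2 / qPochhammer q n := by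
  have hpos n : 0 < q ^ n.choose 2 / qPochhammer q n :=
    div_pos (pow_pos hq0 _) (qPochhammer_pos hq0.le hq1 n)
  have hratio n : ‖q ^ (n + 1).choose 2 / qPochhammer q (n + 1)‖ /
      ‖q ^ n.choose 2 / qPochhammer q n‖ = q ^ n / (1 - q ^ (n + 1)) := by
    rw [Real.norm_of_nonneg (hpos _).le, Real.norm_of_nonneg (hpos _).le, Nat.add_one_choose_two,
      qPochhammer_succ]
    have := (qPochhammer_pos hq0.le hq1 n).ne'
    have := (one_sub_pow_pos hq0.le hq1 n.succ_ne_zero).ne'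
    field_simp
    ring
  have hq : Tendsto (fun n : ℕ => q ^ n) atTop (𝓝 0) :=
    tendsto_pow_atTop_nhds_zero_of_lt_one hq0.le hq1
  refine summable_of_ratio_test_tendsto_lt_one zero_lt_one
    (Eventually.of_forall fun n => (hpos n).ne') ?_
  simp_rw [hratio]
  simpa [Pi.div_def] using
    hq.div (tendsto_const_nhds.sub (hq.comp (tendsto_add_atTop_nat 1))) (by simp)

end qPochhammer

noncomputable def hypoexpCoeff (q : ℝ) (M n : ℕ) : ℝ :=
  (-1) ^ n * q ^ n.choose 2 / (qPochhammer q n * qPochhammer q (M - n))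

/-- The density of `E₀ + ⋯ + E_M` for independent `Eₙ ~ Exp(q⁻ⁿ)`, in partial fractions. -/
noncomputable def hypoexpDensity (q : ℝ) (M : ℕ) (y : ℝ) : ℝ :=
  ∑ n ∈ range (M + 1), hypoexpCoeff q M n * exp (-y / q ^ n)

section hypoexpDensity

variable {q : ℝ}

lemma one_sub_pow_mul_hypoexpCoeff_succ_zero (hq0 : 0 ≤ q) (hq1 : q < 1) (N : ℕ) :
    (1 - q ^ (N + 1)) * hypoexpCoeff q (N + 1) 0 = hypoexpCoeff q N 0 := by
  have := (qPochhammer_pos hq0 hq1 N).ne'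
  have := (one_sub_pow_pos hq0 hq1 N.succ_ne_zero).ne'
  simp only [hypoexpCoeff, Nat.sub_zero, qPochhammer_succ]
  field_simp

-- the `q`-Pascal rule, in the normalization of `hypoexpCoeff`
lemma one_sub_pow_mul_hypoexpCoeff_succ_succ (hq0 : 0 ≤ q) (hq1 : q < 1) {k N : ℕ}
    (hk : k + 1 ≤ N) :
    (1 - q ^ (N + 1)) * hypoexpCoeff q (N + 1) (k + 1) =
      q ^ (k + 1) * hypoexpCoeff q N (k + 1) - q ^ k * hypoexpCoeff q N k := by
  obtain ⟨j, rfl⟩ : ∃ j, N = k + 1 + j := ⟨N - (k + 1), by omega⟩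
  simp only [hypoexpCoeff, show k + 1 + j + 1 - (k + 1) = j + 1 by omega,
    show k + 1 + j - (k + 1) = j by omega, show k + 1 + j - k = j + 1 by omega,
    Nat.add_one_choose_two, qPochhammer_succ]
  have := (qPochhammer_pos hq0 hq1 k).ne'
  have := (qPochhammer_pos hq0 hq1 j).ne'
  have := (one_sub_pow_pos hq0 hq1 k.succ_ne_zero).ne'
  have := (one_sub_pow_pos hq0 hq1 j.succ_ne_zero).ne'
  field_simp
  ring

lemma one_sub_pow_mul_hypoexpCoeff_succ_self (hq0 : 0 ≤ q) (hq1 : q < 1) (N : ℕ) :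
    (1 - q ^ (N + 1)) * hypoexpCoeff q (N + 1) (N + 1) = -(q ^ N * hypoexpCoeff q N N) := by
  simp only [hypoexpCoeff, Nat.sub_self, Nat.add_one_choose_two, qPochhammer_succ, qPochhammer_zero]
  have := (qPochhammer_pos hq0 hq1 N).ne'
  have := (one_sub_pow_pos hq0 hq1 N.succ_ne_zero).ne'
  field_simp
  ring

lemma one_sub_pow_mul_sum_hypoexpCoeff (hq0 : 0 ≤ q) (hq1 : q < 1) {k N : ℕ} (hk : k ≤ N) :
    (1 - q ^ (N + 1)) * ∑ n ∈ range (k + 1), hypoexpCoeff q (N + 1) n =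
      q ^ k * hypoexpCoeff q N k := by
  induction k with
  | zero => simp [one_sub_pow_mul_hypoexpCoeff_succ_zero hq0 hq1]
  | succ k ih =>
    rw [sum_range_succ, mul_add, ih (by omega),
      one_sub_pow_mul_hypoexpCoeff_succ_succ hq0 hq1 hk]
    ring

lemma hypoexpDensity_zero_left (q y : ℝ) : hypoexpDensity q 0 y = exp (-y) := by
  simp [hypoexpDensity, hypoexpCoeff]

lemma hypoexpDensity_succ_zero (hq0 : 0 ≤ q) (hq1 : q < 1) (N : ℕ) :
    hypoexpDensity q (N + 1) 0 = 0 := by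
  have hsum : (1 - q ^ (N + 1)) * ∑ n ∈ range (N + 2), hypoexpCoeff q (N + 1) n = 0 := by
    rw [sum_range_succ, mul_add, one_sub_pow_mul_sum_hypoexpCoeff hq0 hq1 le_rfl,
      one_sub_pow_mul_hypoexpCoeff_succ_self hq0 hq1]
    ring
  simpa [hypoexpDensity, (one_sub_pow_pos hq0 hq1 N.succ_ne_zero).ne'] using hsum

lemma hypoexpCoeff_succ_mul_inv_sub_inv (hq0 : 0 < q) (hq1 : q < 1) {n N : ℕ} (hn : n ≤ N) :
    hypoexpCoeff q (N + 1) n * ((q ^ (N + 1))⁻¹ - (q ^ n)⁻¹) =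
      (q ^ (N + 1))⁻¹ * hypoexpCoeff q N n := by
  obtain ⟨j, rfl⟩ : ∃ j, N = n + j := ⟨N - n, by omega⟩
  simp only [hypoexpCoeff, show n + j + 1 - n = j + 1 by omega, Nat.add_sub_cancel_left,
    qPochhammer_succ]
  have := (pow_pos hq0 n).ne'
  have := (qPochhammer_pos hq0.le hq1 n).ne'
  have := (qPochhammer_pos hq0.le hq1 j).ne'
  have := (one_sub_pow_pos hq0.le hq1 j.succ_ne_zero).ne'
  field_simp
  ring

lemma hasDerivAt_hypoexpDensity_succ (hq0 : 0 < q) (hq1 : q < 1) (N : ℕ) (y : ℝ) :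
    HasDerivAt (hypoexpDensity q (N + 1))
      ((q ^ (N + 1))⁻¹ * (hypoexpDensity q N y - hypoexpDensity q (N + 1) y)) y := by
  have hterm : ∀ n ∈ range (N + 2),
      HasDerivAt (fun z => hypoexpCoeff q (N + 1) n * exp (-z / q ^ n))
      (hypoexpCoeff q (N + 1) n * (exp (-y / q ^ n) * (-1 / q ^ n))) y :=
    fun n _ => (((hasDerivAt_id y).neg.div_const _).exp).const_mul _
  have hrecursion : ∑ n ∈ range (N + 2),
      hypoexpCoeff q (N + 1) n * ((q ^ (N + 1))⁻¹ - (q ^ n)⁻¹) * exp (-y / q ^ n) =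
        (q ^ (N + 1))⁻¹ * hypoexpDensity q N y := by
    rw [sum_range_succ, sub_self, mul_zero, zero_mul, add_zero, hypoexpDensity, mul_sum]
    refine sum_congr rfl fun n hn => ?_
    rw [hypoexpCoeff_succ_mul_inv_sub_inv hq0 hq1 (mem_range_succ_iff.1 hn), mul_assoc]
  refine (HasDerivAt.fun_sum hterm).congr_deriv ?_
  rw [mul_sub, ← hrecursion, hypoexpDensity, mul_sum, ← sum_sub_distrib]
  exact sum_congr rfl fun n _ => by ring

lemma nonneg_of_hasDerivAt_eq_mul_sub {f g : ℝ → ℝ} {a : ℝ} (ha : 0 ≤ a)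
    (hf : ∀ y, HasDerivAt f (a * (g y - f y)) y) (hf0 : 0 ≤ f 0)
    (hg : ∀ y, 0 ≤ y → 0 ≤ g y) {y : ℝ} (hy : 0 ≤ y) : 0 ≤ f y := by
  have hderiv z : HasDerivAt (fun w => exp (a * w) * f w) (a * exp (a * z) * g z) z := by
    refine (((hasDerivAt_id z).const_mul a).exp.fun_mul (hf z)).congr_deriv ?_
    simp only [id]
    ring
  have hmono : MonotoneOn (fun w => exp (a * w) * f w) (Set.Ici 0) := by
    refine monotoneOn_of_hasDerivWithinAt_nonneg (convex_Ici 0)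
      (fun z _ => (hderiv z).continuousAt.continuousWithinAt)
      (fun z _ => (hderiv z).hasDerivWithinAt) fun z hz => ?_
    rw [interior_Ici] at hz
    exact mul_nonneg (mul_nonneg ha (exp_pos _).le) (hg z (le_of_lt hz))
  have h := hmono Set.self_mem_Ici hy hy
  simp only [mul_zero, exp_zero, one_mul] at h
  exact (mul_nonneg_iff_of_pos_left (exp_pos _)).1 (hf0.trans h)

lemma hypoexpDensity_nonneg (hq0 : 0 < q) (hq1 : q < 1) (N : ℕ) {y : ℝ} (hy : 0 ≤ y) :
    0 ≤ hypoexpDensity q N y := by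
  induction N generalizing y with
  | zero => exact hypoexpDensity_zero_left q y ▸ (exp_pos _).le
  | succ N ih =>
    exact nonneg_of_hasDerivAt_eq_mul_sub (inv_pos.2 (pow_pos hq0 _)).le
      (hasDerivAt_hypoexpDensity_succ hq0 hq1 N) (hypoexpDensity_succ_zero hq0.le hq1 N).ge
      (fun _ => ih) hy

end hypoexpDensity

theorem tsum_neg_one_pow_mul_exp_div_pow_nonneg {q : ℝ} (hq0 : 0 < q) (hq1 : q < 1) {y : ℝ}
    (hy : 0 ≤ y) :
    0 ≤ ∑' n : ℕ, (-1) ^ n * q ^ n.choose 2 / qPochhammer q n * exp (-y / q ^ n) := by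
  let g : ℕ → ℝ := fun n => (-1) ^ n * q ^ n.choose 2 / qPochhammer q n * exp (-y / q ^ n)
  let f : ℕ → ℕ → ℝ := fun N n =>
    if n ≤ N then g n * (qPochhammer q N / qPochhammer q (N - n)) else 0
  have hf_tsum N : ∑' n, f N n = qPochhammer q N * hypoexpDensity q N y := by
    rw [tsum_eq_sum (s := range (N + 1)) fun n hn => if_neg (by simpa using hn),
      hypoexpDensity, mul_sum]
    refine sum_congr rfl fun n hn => ?_
    rw [if_pos (mem_range_succ_iff.1 hn)]
    simp only [g, hypoexpCoeff]
    have := (qPochhammer_pos hq0.le hq1 n).ne'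
    have := (qPochhammer_pos hq0.le hq1 (N - n)).ne'
    field_simp
  have hf_lim n : Tendsto (f · n) atTop (𝓝 (g n)) := by
    have h := (tendsto_qPochhammer_div_qPochhammer_sub hq0.le hq1 n).const_mul (g n)
    rw [mul_one] at h
    refine h.congr' ?_
    filter_upwards [eventually_ge_atTop n] with N hN
    exact (if_pos hN).symm
  have hf_bound N n : ‖f N n‖ ≤ q ^ n.choose 2 / qPochhammer q n := by
    have hP := qPochhammer_pos hq0.le hq1
    have hbound_nonneg : 0 ≤ q ^ n.choose 2 / qPochhammer q n :=
      (div_pos (pow_pos hq0 _) (hP n)).le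
    have hg : ‖g n‖ ≤ q ^ n.choose 2 / qPochhammer q n := by
      rw [norm_mul, norm_div, norm_mul, norm_pow, norm_neg, norm_one, one_pow, one_mul,
        Real.norm_of_nonneg (pow_pos hq0 _).le, Real.norm_of_nonneg (hP n).le,
        Real.norm_of_nonneg (exp_pos _).le]
      exact mul_le_of_le_one_right hbound_nonneg (exp_le_one_iff.2
        (div_nonpos_of_nonpos_of_nonneg (neg_nonpos.2 hy) (pow_pos hq0 n).le))
    by_cases hn : n ≤ N
    · simp only [f, if_pos hn, norm_mul]
      refine (mul_le_of_le_one_right (norm_nonneg _) ?_).trans hg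
      rw [Real.norm_of_nonneg (div_pos (hP N) (hP _)).le, div_le_one (hP _)]
      exact qPochhammer_antitone hq0.le hq1 (N.sub_le n)
    · simpa [f, hn] using hbound_nonneg
  exact ge_of_tendsto' (tendsto_tsum_of_dominated_convergence
    (summable_pow_choose_two_div_qPochhammer hq0 hq1) hf_lim (Eventually.of_forall hf_bound))
    fun N => (hf_tsum N).symm ▸ mul_nonneg (qPochhammer_pos hq0.le hq1 N).le
      (hypoexpDensity_nonneg hq0 hq1 N hy)

lemma prod_one_sub_inv_pow {q : ℝ} (hq : q ≠ 0) (n : ℕ) :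
    ∏ k ∈ Icc 1 n, (1 - (q ^ k)⁻¹) = (-1) ^ n * qPochhammer q n / q ^ (n.choose 2 + n) := by
  induction n with
  | zero => simp
  | succ n ih =>
    rw [prod_Icc_succ_top (Nat.le_add_left 1 n), ih, qPochhammer_succ, Nat.add_one_choose_two]
    field_simp
    ring

lemma inv_pow_div_prod_one_sub_inv_pow {q : ℝ} (hq : q ≠ 0) (n : ℕ) :
    (q ^ n)⁻¹ / ∏ k ∈ Icc 1 n, (1 - (q ^ k)⁻¹) = (-1) ^ n * q ^ n.choose 2 / qPochhammer q n := by
  rw [prod_one_sub_inv_pow hq]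
  rcases eq_or_ne (qPochhammer q n) 0 with h | h
  · simp [h]
  · have hsign : ((-1 : ℝ) ^ n) ^ 2 = 1 := by rw [← pow_mul, pow_mul', neg_one_sq, one_pow]
    field_simp
    linear_combination (-(q ^ n * q ^ n.choose 2)) * hsign

lemma zpow_neg_two_mul_natCast (r : ℝ) (k : ℕ) : r ^ (-(2 * (k : ℤ))) = ((r ^ 2) ^ k)⁻¹ := by
  rw [zpow_neg, zpow_mul, zpow_natCast, zpow_ofNat]

theorem stmt1 (r ρ : ℝ) (hr0 : 0 < r) (hr1 : r < 1) (hρ : 0 < ρ) :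
    ∀ x : ℝ, 0 ≤ x → 0 ≤ H r ρ x := by
  intro x hx
  have hq0 : 0 < r ^ 2 := by positivity
  have hq1 : r ^ 2 < 1 := pow_lt_one₀ hr0.le hr1 two_ne_zero
  have hterm (n : ℕ) : (r ^ (-(2 * (n : ℤ))) / ∏ k ∈ Icc 1 n, (1 - r ^ (-(2 * (k : ℤ))))) *
        exp (-ρ * r ^ (-(2 * (n : ℤ))) * x ^ 2 / 2) =
      (-1) ^ n * (r ^ 2) ^ n.choose 2 / qPochhammer (r ^ 2) n *
        exp (-(ρ * x ^ 2 / 2) / (r ^ 2) ^ n) := by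
    simp only [zpow_neg_two_mul_natCast]
    rw [inv_pow_div_prod_one_sub_inv_pow hq0.ne']
    ring_nf
  refine mul_nonneg (div_nonneg (sqrt_nonneg _) (tprod_nonneg fun n => ?_)) ?_
  · exact sub_nonneg.2 (pow_le_one₀ hr0.le hr1.le)
  · rw [tsum_congr hterm]
    exact tsum_neg_one_pow_mul_exp_div_pow_nonneg hq0 hq1 (by positivity)
end

section
/- For every r ∈ (0,1) and every ρ > 0, one has H_{r,ρ}(0) = 0; equivalently, for every q ∈ (0,1), Σ_{n=0}^∞ q^{−n} / ∏_{k=1}^{n} (1 − q^{−k}) = 0 (with q = r²). -/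
open Filter Finset Topology

theorem sum_range_div_prod_one_sub {K : Type*} [Field K] (x : ℕ → K) (hx0 : x 0 = 1)
    (hx : ∀ k, x (k + 1) ≠ 1) (N : ℕ) :
    ∑ n ∈ range (N + 1), x n / ∏ k ∈ Icc 1 n, (1 - x k) = (∏ k ∈ Icc 1 N, (1 - x k))⁻¹ := by
  induction N with
  | zero => simp [hx0]
  | succ N ih =>
    have hsub : 1 - x (N + 1) ≠ 0 := sub_ne_zero.mpr (hx N).symm
    have key : 1 + x (N + 1) / (1 - x (N + 1)) = (1 - x (N + 1))⁻¹ := by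
      field_simp
      ring
    rw [sum_range_succ, ih, prod_Icc_succ_top (by omega), mul_inv, ← div_div]
    linear_combination (∏ k ∈ Icc 1 N, (1 - x k))⁻¹ * key

theorem pow_div_prod_one_sub_pow_succ {K : Type*} [Field K] (p : K) (n : ℕ) :
    p ^ (n + 1) / ∏ k ∈ Icc 1 (n + 1), (1 - p ^ k) =
      (p ^ n / ∏ k ∈ Icc 1 n, (1 - p ^ k)) * (p / (1 - p ^ (n + 1))) := by
  rw [prod_Icc_succ_top (by omega), ← mul_div_mul_comm, ← pow_succ]

section OneLtBase

variable {p : ℝ}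

theorem tendsto_div_one_sub_pow_succ (hp : 1 < p) :
    Tendsto (fun n : ℕ => p / (1 - p ^ (n + 1))) atTop (𝓝 0) := by
  have hpow : Tendsto (fun n : ℕ => p ^ (n + 1)) atTop atTop :=
    (tendsto_add_atTop_iff_nat 1).mpr (tendsto_pow_atTop_atTop_of_one_lt hp)
  have hden : Tendsto (fun n : ℕ => 1 - p ^ (n + 1)) atTop atBot := by
    simpa only [Function.comp_def, sub_eq_add_neg] using
      tendsto_atBot_add_const_left _ 1 (tendsto_neg_atTop_atBot.comp hpow)
  exact tendsto_const_nhds.div_atBot hden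

theorem summable_pow_div_prod_one_sub_pow (hp : 1 < p) :
    Summable fun n : ℕ => p ^ n / ∏ k ∈ Icc 1 n, (1 - p ^ k) := by
  refine summable_of_ratio_norm_eventually_le (r := 1 / 2) (by norm_num) ?_
  have hsmall := (tendsto_div_one_sub_pow_succ hp).norm.eventually_lt_const
    (by norm_num : ‖(0 : ℝ)‖ < 1 / 2)
  filter_upwards [hsmall] with n hn
  rw [pow_div_prod_one_sub_pow_succ, norm_mul, mul_comm]
  exact mul_le_mul_of_nonneg_right hn.le (norm_nonneg _)

theorem hasSum_pow_div_prod_one_sub_pow (hp : 1 < p) :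
    HasSum (fun n : ℕ => p ^ n / ∏ k ∈ Icc 1 n, (1 - p ^ k)) 0 := by
  have hsum := summable_pow_div_prod_one_sub_pow hp
  have hpow_ne_one : ∀ k : ℕ, p ^ (k + 1) ≠ 1 := fun k => (one_lt_pow₀ hp k.succ_ne_zero).ne'
  have hpartial : ∀ N : ℕ, ∑ n ∈ range (N + 1), p ^ n / ∏ k ∈ Icc 1 n, (1 - p ^ k) =
      p ^ N / (∏ k ∈ Icc 1 N, (1 - p ^ k)) * p⁻¹ ^ N := by
    intro N
    have hpN : p ^ N ≠ 0 := pow_ne_zero N (by positivity)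
    rw [sum_range_div_prod_one_sub (p ^ ·) (pow_zero p) hpow_ne_one, inv_pow]
    field_simp
  have hlim : Tendsto (fun N : ℕ => p ^ N / (∏ k ∈ Icc 1 N, (1 - p ^ k)) * p⁻¹ ^ N)
      atTop (𝓝 0) := by
    simpa using hsum.tendsto_atTop_zero.mul
      (tendsto_pow_atTop_nhds_zero_of_lt_one (by positivity) (inv_lt_one_of_one_lt₀ hp))
  rw [hsum.hasSum_iff_tendsto_nat, ← tendsto_add_atTop_iff_nat 1]
  simpa only [hpartial] using hlim

end OneLtBase

theorem tsum_zpow_neg_div_prod_one_sub_zpow_neg {q : ℝ} (hq0 : 0 < q) (hq1 : q < 1) :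
    ∑' n : ℕ, q ^ (-(n : ℤ)) / ∏ k ∈ Icc 1 n, (1 - q ^ (-(k : ℤ))) = 0 := by
  simp only [zpow_neg, zpow_natCast, ← inv_pow]
  exact (hasSum_pow_div_prod_one_sub_pow ((one_lt_inv₀ hq0).mpr hq1)).tsum_eq

theorem stmt4_general (r ρ : ℝ) (hr0 : 0 < r) (hr1 : r < 1) :
    H r ρ 0 = 0 ∧
    ∀ q : ℝ, 0 < q → q < 1 →
      ∑' n : ℕ, q ^ (-(n : ℤ)) / ∏ k ∈ Finset.Icc 1 n, (1 - q ^ (-(k : ℤ))) = 0 := by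
  refine ⟨?_, fun q => tsum_zpow_neg_div_prod_one_sub_zpow_neg⟩
  have hsq : ∀ m : ℕ, r ^ (-(2 * (m : ℤ))) = (r ^ 2) ^ (-(m : ℤ)) := fun m => by
    rw [neg_mul_eq_mul_neg, zpow_mul, zpow_two, sq]
  have hseries := tsum_zpow_neg_div_prod_one_sub_zpow_neg (pow_pos hr0 2)
    (pow_lt_one₀ hr0.le hr1 two_ne_zero)
  simp only [H, hsq, zero_pow two_ne_zero, mul_zero, zero_div, Real.exp_zero, mul_one, hseries]

theorem stmt4 (r ρ : ℝ) (hr0 : 0 < r) (hr1 : r < 1) (hρ : 0 < ρ) :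
    H r ρ 0 = 0 ∧
    ∀ q : ℝ, 0 < q → q < 1 →
      ∑' n : ℕ, q ^ (-(n : ℤ)) / ∏ k ∈ Finset.Icc 1 n, (1 - q ^ (-(k : ℤ))) = 0 :=
  stmt4_general r ρ hr0 hr1
end

section
/- (Single-node network, uniqueness of the equilibrium fixed point.) Let K ≥ 1, and for 1 ≤ k ≤ K let r_k ∈ (0,1), p_k > 0, a_k > 0, and let β_k: [0,∞) → (0,∞) be continuous and nondecreasing. Then there exists a unique u ≥ 0 satisfying u = Σ_{k=1}^{K} ψ(r_k) · p_k · √( a_k / β_k(u) ); moreover this u is strictly positive. -/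
/-!
The right-hand side `F u` is a finite sum of terms `c_k √(a_k / β_k u)` with `c_k = ψ(r_k) p_k > 0`
(the factors of the product defining `ψ` are positive and their logarithms are summable), so `F` is
positive, continuous and nonincreasing on `[0, ∞)`. The intermediate value theorem applied to
`u - F u` on `[0, F 0]` gives a fixed point, which is unique because `F` is nonincreasing and
positive because `F` is.
-/

open Set

lemma pow_lt_one_of_abs_lt_one {r : ℝ} (hr : |r| < 1) {k : ℕ} (hk : k ≠ 0) : r ^ k < 1 :=
  (abs_lt.mp (by rw [abs_pow]; exact pow_lt_one₀ (abs_nonneg r) hr hk)).2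

lemma summable_log_one_sub_pow_two_mul_add {r : ℝ} (hr : |r| < 1) (j : ℕ) :
    Summable fun n : ℕ => Real.log (1 - r ^ (2 * n + j)) := by
  have hgeom : Summable fun n : ℕ => -(r ^ j * (r ^ 2) ^ n) :=
    ((summable_geometric_of_lt_one (sq_nonneg r) (by nlinarith [abs_nonneg r, sq_abs r])).mul_left
      (r ^ j)).neg
  refine (Real.summable_log_one_add_of_summable hgeom).congr fun n => ?_
  rw [← sub_eq_add_neg, ← pow_mul, ← pow_add, add_comm j]

lemma psi_pos {r : ℝ} (hr : |r| < 1) : 0 < psi r := by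
  have hsub {k : ℕ} (hk : k ≠ 0) : 0 < 1 - r ^ k := sub_pos.mpr (pow_lt_one_of_abs_lt_one hr hk)
  have hfac_pos (n : ℕ) : 0 < (1 - r ^ (2 * n + 2)) / (1 - r ^ (2 * n + 1)) :=
    div_pos (hsub (by omega)) (hsub (by omega))
  have hlog : Summable fun n : ℕ =>
      Real.log ((1 - r ^ (2 * n + 2)) / (1 - r ^ (2 * n + 1))) := by
    refine ((summable_log_one_sub_pow_two_mul_add hr 2).sub
      (summable_log_one_sub_pow_two_mul_add hr 1)).congr fun n => ?_
    rw [Real.log_div (hsub (by omega)).ne' (hsub (by omega)).ne']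
  unfold psi
  rw [← Real.rexp_tsum_eq_tprod hfac_pos hlog]
  exact mul_pos (Real.sqrt_pos.mpr (by positivity)) (Real.exp_pos _)

lemma AntitoneOn.eq_of_fixedPoints {α : Type*} [LinearOrder α] {F : α → α} {s : Set α}
    (hF : AntitoneOn F s) {u v : α} (hu : u ∈ s) (hv : v ∈ s) (hFu : F u = u) (hFv : F v = v) :
    u = v := by
  rcases le_total u v with huv | hvu
  · exact le_antisymm huv (hFv ▸ hFu ▸ hF hu hv huv)
  · exact le_antisymm (hFu ▸ hFv ▸ hF hv hu hvu) hvu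

lemma existsUnique_nonneg_fixedPoint {F : ℝ → ℝ} (hcont : ContinuousOn F (Ici 0))
    (hanti : AntitoneOn F (Ici 0)) (h0 : 0 ≤ F 0) : ∃! u : ℝ, 0 ≤ u ∧ u = F u := by
  have hle : F (F 0) ≤ F 0 := hanti self_mem_Ici (mem_Ici.mpr h0) h0
  obtain ⟨u, hu, hFu⟩ := intermediate_value_Icc h0
    (continuousOn_id.sub (hcont.mono Icc_subset_Ici_self))
    (show (0 : ℝ) ∈ Icc (0 - F 0) (F 0 - F (F 0)) by constructor <;> linarith)
  refine ⟨u, ⟨hu.1, sub_eq_zero.mp hFu⟩, fun v ⟨hv, hFv⟩ => ?_⟩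
  exact hanti.eq_of_fixedPoints hv hu.1 hFv.symm (sub_eq_zero.mp hFu).symm

section WeightedSqrtSum

variable {ι : Type*} [Fintype ι] {c a : ι → ℝ} {β : ι → ℝ → ℝ} {s : Set ℝ}

lemma antitoneOn_sum_mul_sqrt_div (hc : ∀ k, 0 ≤ c k) (ha : ∀ k, 0 ≤ a k)
    (hβpos : ∀ k, ∀ x ∈ s, 0 < β k x) (hβmono : ∀ k, MonotoneOn (β k) s) :
    AntitoneOn (fun u => ∑ k, c k * √(a k / β k u)) s := fun x hx _ hy hxy =>
  Finset.sum_le_sum fun k _ => mul_le_mul_of_nonneg_left (Real.sqrt_le_sqrt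
    (div_le_div_of_nonneg_left (ha k) (hβpos k x hx) (hβmono k hx hy hxy))) (hc k)

lemma continuousOn_sum_mul_sqrt_div (hβpos : ∀ k, ∀ x ∈ s, β k x ≠ 0)
    (hβcont : ∀ k, ContinuousOn (β k) s) :
    ContinuousOn (fun u => ∑ k, c k * √(a k / β k u)) s :=
  continuousOn_finsetSum _ fun k _ => continuousOn_const.mul
    (continuousOn_const.div (hβcont k) (hβpos k)).sqrt

lemma sum_mul_sqrt_div_pos [Nonempty ι] (hc : ∀ k, 0 < c k) (ha : ∀ k, 0 < a k)
    {u : ℝ} (hβpos : ∀ k, 0 < β k u) : 0 < ∑ k, c k * √(a k / β k u) :=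
  Finset.sum_pos (fun k _ => mul_pos (hc k) (Real.sqrt_pos.mpr (div_pos (ha k) (hβpos k))))
    Finset.univ_nonempty

end WeightedSqrtSum

theorem stmt7 (K : ℕ) (hK : 1 ≤ K) (r p a : Fin K → ℝ) (β : Fin K → ℝ → ℝ)
    (hr : ∀ k, 0 < r k ∧ r k < 1) (hp : ∀ k, 0 < p k) (ha : ∀ k, 0 < a k)
    (hβpos : ∀ k x, 0 ≤ x → 0 < β k x)
    (hβcont : ∀ k, ContinuousOn (β k) (Set.Ici 0))
    (hβmono : ∀ k, MonotoneOn (β k) (Set.Ici 0)) :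
    (∃! u : ℝ, 0 ≤ u ∧ u = ∑ k, psi (r k) * p k * Real.sqrt (a k / β k u)) ∧
    ∀ u : ℝ, 0 ≤ u → u = ∑ k, psi (r k) * p k * Real.sqrt (a k / β k u) →
      0 < u := by
  have : Nonempty (Fin K) := ⟨⟨0, hK⟩⟩
  have hc k : 0 < psi (r k) * p k :=
    mul_pos (psi_pos (abs_lt.mpr ⟨by linarith [(hr k).1], (hr k).2⟩)) (hp k)
  have hpos u (hu : 0 ≤ u) : 0 < ∑ k, psi (r k) * p k * √(a k / β k u) :=
    sum_mul_sqrt_div_pos hc ha fun k => hβpos k u hu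
  refine ⟨existsUnique_nonneg_fixedPoint ?_ ?_ (hpos 0 le_rfl).le, fun u hu hFu => hFu ▸ hpos u hu⟩
  · exact continuousOn_sum_mul_sqrt_div (fun k x hx => (hβpos k x hx).ne') hβcont
  · exact antitoneOn_sum_mul_sqrt_div (fun k => (hc k).le) (fun k => (ha k).le)
      hβpos hβmono
end

section
/- (Linear network, uniqueness of the equilibrium fixed point.) Let J ≥ 1, let α_1, …, α_{J+1} > 0, and for 1 ≤ j ≤ J+1 let β_j: [0,∞) → (0,∞) be continuous and nondecreasing. Then the system of equations u_j = α_j/√(β_j(u_j)) + α_{J+1}/√(β_{J+1}(u_1 + ⋯ + u_J)), for 1 ≤ j ≤ J, has exactly one solution (u_1, …, u_J) ∈ [0,∞)^J, and each u_j is strictly positive. -/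
/-!
Extend every term `x ↦ α_k / √(β_k x)` to all of `ℝ` by its value at `0`, giving continuous,
antitone, positive functions `f_j` (classes `j ≤ J`) and `g` (class `J + 1`). For such `f`, the map `x ↦ x - f x` is an increasing homeomorphism of `ℝ`,
so the `j`-th equation `u j - f_j (u j) = g (∑ u)` determines `u j` as a continuous nondecreasing
function of the common term `g (∑ u)`. Existence then reduces to the scalar equation
`s = ∑ j, φ_j (g s)`, whose right-hand side is antitone in `s`, so `s - ∑ j, φ_j (g s)` is again an
increasing homeomorphism and has a zero. Uniqueness: if `∑ u ≤ ∑ v`, then `g (∑ v) ≤ g (∑ u)`, hence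
`v ≤ u` coordinatewise, so the sums agree and then so do all coordinates.
-/

open Filter Finset Function Real

namespace Antitone

variable {f : ℝ → ℝ}

lemma strictMono_id_sub (hf : Antitone f) : StrictMono fun x => x - f x :=
  fun x y hxy => by linarith [hf hxy.le]

lemma surjective_id_sub (hf : Antitone f) (hfc : Continuous f) :
    Surjective fun x => x - f x := by
  refine Continuous.surjective (by fun_prop) ?_ ?_
  · refine tendsto_atTop_mono' _ ?_ (tendsto_atTop_add_const_right _ (-f 0) tendsto_id)
    filter_upwards [eventually_ge_atTop 0] with x hx
    linarith [hf hx, id_eq x]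
  · refine tendsto_atBot_mono' _ ?_ (tendsto_atBot_add_const_right _ (-f 0) tendsto_id)
    filter_upwards [eventually_le_atBot 0] with x hx
    linarith [hf hx, id_eq x]

noncomputable def orderIsoIdSub (hf : Antitone f) (hfc : Continuous f) : ℝ ≃o ℝ :=
  StrictMono.orderIsoOfSurjective _ hf.strictMono_id_sub (hf.surjective_id_sub hfc)

lemma orderIsoIdSub_symm_apply_eq (hf : Antitone f) (hfc : Continuous f) (c : ℝ) :
    (orderIsoIdSub hf hfc).symm c = f ((orderIsoIdSub hf hfc).symm c) + c := by
  have h : (orderIsoIdSub hf hfc).symm c - f ((orderIsoIdSub hf hfc).symm c) = c :=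
    (orderIsoIdSub hf hfc).apply_symm_apply c
  linarith

end Antitone

section SumCoupledFixedPoint

variable {ι : Type*} [Fintype ι] {f : ι → ℝ → ℝ} {g : ℝ → ℝ}

lemma le_of_eq_add_sum (hf : ∀ i, Antitone (f i)) (hg : Antitone g) {u v : ι → ℝ}
    (hu : ∀ i, u i = f i (u i) + g (∑ j, u j)) (hv : ∀ i, v i = f i (v i) + g (∑ j, v j))
    (hsum : ∑ j, u j ≤ ∑ j, v j) : v ≤ u := fun i =>
  (hf i).strictMono_id_sub.le_iff_le.1 (by linarith [hu i, hv i, hg hsum])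

lemma eq_of_eq_add_sum (hf : ∀ i, Antitone (f i)) (hg : Antitone g) {u v : ι → ℝ}
    (hu : ∀ i, u i = f i (u i) + g (∑ j, u j)) (hv : ∀ i, v i = f i (v i) + g (∑ j, v j)) :
    u = v := by
  rcases le_total (∑ j, u j) (∑ j, v j) with h | h
  · have hvu := le_of_eq_add_sum hf hg hu hv h
    exact le_antisymm (le_of_eq_add_sum hf hg hv hu (sum_le_sum fun i _ => hvu i)) hvu
  · have huv := le_of_eq_add_sum hf hg hv hu h
    exact le_antisymm huv (le_of_eq_add_sum hf hg hu hv (sum_le_sum fun i _ => huv i))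

lemma exists_eq_add_sum (hf : ∀ i, Antitone (f i)) (hfc : ∀ i, Continuous (f i))
    (hg : Antitone g) (hgc : Continuous g) :
    ∃ u : ι → ℝ, ∀ i, u i = f i (u i) + g (∑ j, u j) := by
  set φ : ι → ℝ ≃o ℝ := fun i => ((hf i).orderIsoIdSub (hfc i)).symm
  set G : ℝ → ℝ := fun s => ∑ i, φ i (g s)
  have hG : Antitone G := fun s t hst => sum_le_sum fun i _ => (φ i).monotone (hg hst)
  have hGc : Continuous G := continuous_finsetSum _ fun i _ => (φ i).continuous.comp hgc
  obtain ⟨s, hs⟩ := hG.surjective_id_sub hGc 0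
  have hsum : ∑ i, φ i (g s) = s := by linarith [hs]
  exact ⟨fun i => φ i (g s), fun i => by
    rw [hsum]; exact (hf i).orderIsoIdSub_symm_apply_eq (hfc i) (g s)⟩

theorem existsUnique_eq_add_sum (hf : ∀ i, Antitone (f i)) (hfc : ∀ i, Continuous (f i))
    (hg : Antitone g) (hgc : Continuous g) :
    ∃! u : ι → ℝ, ∀ i, u i = f i (u i) + g (∑ j, u j) :=
  let ⟨u, hu⟩ := exists_eq_add_sum hf hfc hg hgc
  ⟨u, hu, fun _ hv => eq_of_eq_add_sum hf hg hv hu⟩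

end SumCoupledFixedPoint

section LossTerm

noncomputable def lossTerm (a : ℝ) (b : ℝ → ℝ) (x : ℝ) : ℝ := a / √(b (max x 0))

variable {a : ℝ} {b : ℝ → ℝ}

lemma lossTerm_of_nonneg {x : ℝ} (hx : 0 ≤ x) : lossTerm a b x = a / √(b x) := by
  rw [lossTerm, max_eq_left hx]

lemma lossTerm_pos (ha : 0 < a) (hb : ∀ x, 0 ≤ x → 0 < b x) (x : ℝ) : 0 < lossTerm a b x :=
  div_pos ha (sqrt_pos.2 (hb _ (le_max_right x 0)))

lemma continuous_lossTerm (hb : ∀ x, 0 ≤ x → 0 < b x) (hbc : ContinuousOn b (Set.Ici 0)) :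
    Continuous (lossTerm a b) :=
  continuous_const.div
    (continuous_sqrt.comp
      (hbc.comp_continuous (continuous_id.max continuous_const) fun x => le_max_right x 0))
    fun x => (sqrt_pos.2 (hb _ (le_max_right x 0))).ne'

lemma antitone_lossTerm (ha : 0 ≤ a) (hb : ∀ x, 0 ≤ x → 0 < b x)
    (hbm : MonotoneOn b (Set.Ici 0)) : Antitone (lossTerm a b) := fun x y hxy =>
  div_le_div_of_nonneg_left ha (sqrt_pos.2 (hb _ (le_max_right x 0)))
    (sqrt_le_sqrt (hbm (le_max_right x 0) (le_max_right y 0) (max_le_max hxy le_rfl)))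

end LossTerm

theorem stmt9_general (J : ℕ) (α : Fin (J + 1) → ℝ) (β : Fin (J + 1) → ℝ → ℝ)
    (hα : ∀ j, 0 < α j)
    (hβpos : ∀ j x, 0 ≤ x → 0 < β j x)
    (hβcont : ∀ j, ContinuousOn (β j) (Set.Ici 0))
    (hβmono : ∀ j, MonotoneOn (β j) (Set.Ici 0)) :
    (∃! u : Fin J → ℝ, (∀ j, 0 ≤ u j) ∧
      ∀ j : Fin J, u j = α j.castSucc / Real.sqrt (β j.castSucc (u j)) +
        α (Fin.last J) / Real.sqrt (β (Fin.last J) (∑ i, u i))) ∧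
    ∀ u : Fin J → ℝ, (∀ j, 0 ≤ u j) →
      (∀ j : Fin J, u j = α j.castSucc / Real.sqrt (β j.castSucc (u j)) +
        α (Fin.last J) / Real.sqrt (β (Fin.last J) (∑ i, u i))) →
      ∀ j, 0 < u j := by
  have hF_pos : ∀ k x, 0 < lossTerm (α k) (β k) x := fun k => lossTerm_pos (hα k) (hβpos k)
  have hsol : ∀ u : Fin J → ℝ,
      ((∀ j, 0 ≤ u j) ∧ ∀ j : Fin J, u j = α j.castSucc / √(β j.castSucc (u j)) +
        α (Fin.last J) / √(β (Fin.last J) (∑ i, u i))) ↔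
      ∀ j, u j = lossTerm (α j.castSucc) (β j.castSucc) (u j) +
        lossTerm (α (Fin.last J)) (β (Fin.last J)) (∑ i, u i) := by
    refine fun u => ⟨fun ⟨hu, h⟩ j => ?_, fun h => ?_⟩
    · rw [lossTerm_of_nonneg (hu j), lossTerm_of_nonneg (sum_nonneg fun i _ => hu i)]
      exact h j
    · have hu : ∀ j, 0 ≤ u j := fun j => (h j).symm ▸ (add_pos (hF_pos _ _) (hF_pos _ _)).le
      refine ⟨hu, fun j => ?_⟩
      rw [← lossTerm_of_nonneg (hu j), ← lossTerm_of_nonneg (sum_nonneg fun i _ => hu i)]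
      exact h j
  refine ⟨(existsUnique_congr hsol).2 (existsUnique_eq_add_sum
      (fun j => antitone_lossTerm (hα _).le (hβpos _) (hβmono _))
      (fun j => continuous_lossTerm (hβpos _) (hβcont _))
      (antitone_lossTerm (hα _).le (hβpos _) (hβmono _))
      (continuous_lossTerm (hβpos _) (hβcont _))), fun u hu h j => ?_⟩
  rw [(hsol u).1 ⟨hu, h⟩ j]
  exact add_pos (hF_pos _ _) (hF_pos _ _)

theorem stmt9 (J : ℕ) (hJ : 1 ≤ J) (α : Fin (J + 1) → ℝ) (β : Fin (J + 1) → ℝ → ℝ)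
    (hα : ∀ j, 0 < α j)
    (hβpos : ∀ j x, 0 ≤ x → 0 < β j x)
    (hβcont : ∀ j, ContinuousOn (β j) (Set.Ici 0))
    (hβmono : ∀ j, MonotoneOn (β j) (Set.Ici 0)) :
    (∃! u : Fin J → ℝ, (∀ j, 0 ≤ u j) ∧
      ∀ j : Fin J, u j = α j.castSucc / Real.sqrt (β j.castSucc (u j)) +
        α (Fin.last J) / Real.sqrt (β (Fin.last J) (∑ i, u i))) ∧
    ∀ u : Fin J → ℝ, (∀ j, 0 ≤ u j) →
      (∀ j : Fin J, u j = α j.castSucc / Real.sqrt (β j.castSucc (u j)) +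
        α (Fin.last J) / Real.sqrt (β (Fin.last J) (∑ i, u i))) →
      ∀ j, 0 < u j :=
  stmt9_general J α β hα hβpos hβcont hβmono
end

section
/- Let φ: [0,∞) → (0,∞) be continuous and strictly decreasing, and let α > 0. Then for every s ≥ 0 there exists a unique x_α(s) ≥ 0 satisfying x_α(s) = α · φ( x_α(s) + s ); moreover x_α(s) > 0 and the function s ↦ x_α(s) is strictly decreasing and continuous on [0,∞). -/
theorem stmt10 (φ : ℝ → ℝ) (α : ℝ) (hα : 0 < α)
    (hφpos : ∀ x, 0 ≤ x → 0 < φ x) (hφcont : ContinuousOn φ (Set.Ici 0))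
    (hφanti : StrictAntiOn φ (Set.Ici 0)) :
    ∃ f : ℝ → ℝ,
      (∀ s : ℝ, 0 ≤ s → (0 < f s ∧ f s = α * φ (f s + s) ∧
        ∀ x : ℝ, 0 ≤ x → x = α * φ (x + s) → x = f s)) ∧
      StrictAntiOn f (Set.Ici 0) ∧ ContinuousOn f (Set.Ici 0) := by
  classical
  -- uniqueness helper
  have uniq : ∀ s, 0 ≤ s → ∀ x y, 0 ≤ x → 0 ≤ y →
      x = α * φ (x + s) → y = α * φ (y + s) → x = y := by
    have mono : ∀ s, 0 ≤ s → ∀ x y, 0 ≤ x → 0 ≤ y →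
        x = α * φ (x + s) → y = α * φ (y + s) → x < y → False := by
      intro s hs x y hx hy hxe hye hxy
      have h1 : φ (y + s) < φ (x + s) :=
        hφanti (Set.mem_Ici.mpr (add_nonneg hx hs)) (Set.mem_Ici.mpr (add_nonneg hy hs))
          (by linarith)
      have h2 := mul_lt_mul_of_pos_left h1 hα
      linarith
    intro s hs x y hx hy hxe hye
    by_contra hne
    rcases lt_or_gt_of_ne hne with h | h
    · exact mono s hs x y hx hy hxe hye h
    · exact mono s hs y x hy hx hye hxe h
  -- existence
  have exist : ∀ s, 0 ≤ s → ∃ x, 0 < x ∧ x = α * φ (x + s) := by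
    intro s hs
    set b := α * φ s with hbdef
    have hb : 0 < b := mul_pos hα (hφpos s hs)
    have hcont : ContinuousOn (fun x => x - α * φ (x + s)) (Set.Icc 0 b) := by
      refine continuousOn_id.sub (continuousOn_const.mul ?_)
      refine hφcont.comp (continuous_id.add continuous_const).continuousOn ?_
      intro x hx
      exact Set.mem_Ici.mpr (add_nonneg hx.1 hs)
    have h0 : (fun x => x - α * φ (x + s)) 0 ≤ 0 := by
      simp only [zero_add, zero_sub, neg_nonpos]
      exact hb.le
    have hbge : 0 ≤ (fun x => x - α * φ (x + s)) b := by
      have hlt : φ (b + s) < φ s :=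
        hφanti (Set.mem_Ici.mpr hs) (Set.mem_Ici.mpr (add_nonneg hb.le hs)) (by linarith)
      have := mul_lt_mul_of_pos_left hlt hα
      simp only
      linarith
    obtain ⟨x, hx, hfx⟩ := intermediate_value_Icc hb.le hcont ⟨h0, hbge⟩
    have hxe : x = α * φ (x + s) := by
      have : x - α * φ (x + s) = 0 := hfx
      linarith
    have hxpos : 0 < x := by
      have := mul_pos hα (hφpos (x + s) (add_nonneg hx.1 hs))
      linarith [hxe]
    exact ⟨x, hxpos, hxe⟩
  -- define f
  set f : ℝ → ℝ := fun s => if hs : 0 ≤ s then (exist s hs).choose else 0 with hfdef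
  have hfspec : ∀ s, 0 ≤ s → 0 < f s ∧ f s = α * φ (f s + s) := by
    intro s hs
    simp only [hfdef, dif_pos hs]
    exact (exist s hs).choose_spec
  refine ⟨f, ?_, ?_, ?_⟩
  · intro s hs
    obtain ⟨h1, h2⟩ := hfspec s hs
    exact ⟨h1, h2, fun x hx hxe => uniq s hs x (f s) hx h1.le hxe h2⟩
  · -- strict anti
    intro s hs t ht hst
    simp only [Set.mem_Ici] at hs ht
    obtain ⟨hfs, hes⟩ := hfspec s hs
    obtain ⟨hft, het⟩ := hfspec t ht
    by_contra hle
    push_neg at hle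
    have h1 : φ (f t + t) < φ (f s + s) :=
      hφanti (Set.mem_Ici.mpr (add_nonneg hfs.le hs)) (Set.mem_Ici.mpr (add_nonneg hft.le ht))
        (by linarith)
    have h2 := mul_lt_mul_of_pos_left h1 hα
    linarith
  · -- continuity
    intro s₀ hs₀
    simp only [Set.mem_Ici] at hs₀
    rw [Metric.continuousWithinAt_iff]
    intro ε hε
    obtain ⟨hx₀pos, hx₀e⟩ := hfspec s₀ hs₀
    set x₀ := f s₀ with hx₀def
    set a := x₀ - min ε x₀ / 2 with hadef
    set c := x₀ + ε / 2 with hcdef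
    have hmin : 0 < min ε x₀ := lt_min hε hx₀pos
    have ha0 : 0 < a := by
      have : min ε x₀ ≤ x₀ := min_le_right _ _
      simp only [hadef]; linarith
    have hax : a < x₀ := by simp only [hadef]; linarith
    have hxc : x₀ < c := by simp only [hcdef]; linarith
    -- g_{s₀}(a) < 0 and g_{s₀}(c) > 0
    have hua : a - α * φ (a + s₀) < 0 := by
      have h1 : φ (x₀ + s₀) < φ (a + s₀) :=
        hφanti (Set.mem_Ici.mpr (add_nonneg ha0.le hs₀))
          (Set.mem_Ici.mpr (add_nonneg hx₀pos.le hs₀)) (by linarith)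
      have h2 := mul_lt_mul_of_pos_left h1 hα
      linarith
    have hvc : 0 < c - α * φ (c + s₀) := by
      have h1 : φ (c + s₀) < φ (x₀ + s₀) :=
        hφanti (Set.mem_Ici.mpr (add_nonneg hx₀pos.le hs₀))
          (Set.mem_Ici.mpr (add_nonneg (by linarith : (0:ℝ) ≤ c) hs₀)) (by linarith)
      have h2 := mul_lt_mul_of_pos_left h1 hα
      linarith
    -- continuity of s ↦ a - α φ(a+s) and s ↦ c - α φ(c+s) within Ici 0 at s₀
    have hucont : ContinuousWithinAt (fun s => a - α * φ (a + s)) (Set.Ici 0) s₀ := by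
      refine ContinuousWithinAt.sub continuousWithinAt_const
        (ContinuousWithinAt.mul continuousWithinAt_const ?_)
      refine ContinuousWithinAt.comp (hφcont (a + s₀) ?_)
        ((continuous_const.add continuous_id).continuousWithinAt) ?_
      · exact Set.mem_Ici.mpr (add_nonneg ha0.le hs₀)
      · intro x hx
        exact Set.mem_Ici.mpr (add_nonneg ha0.le hx)
    have hvcont : ContinuousWithinAt (fun s => c - α * φ (c + s)) (Set.Ici 0) s₀ := by
      refine ContinuousWithinAt.sub continuousWithinAt_const
        (ContinuousWithinAt.mul continuousWithinAt_const ?_)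
      refine ContinuousWithinAt.comp (hφcont (c + s₀) ?_)
        ((continuous_const.add continuous_id).continuousWithinAt) ?_
      · exact Set.mem_Ici.mpr (add_nonneg (by linarith) hs₀)
      · intro x hx
        exact Set.mem_Ici.mpr (add_nonneg (by linarith) hx)
    rw [Metric.continuousWithinAt_iff] at hucont hvcont
    obtain ⟨δ₁, hδ₁, hδ₁h⟩ := hucont _ (neg_pos.mpr hua)
    obtain ⟨δ₂, hδ₂, hδ₂h⟩ := hvcont _ hvc
    refine ⟨min δ₁ δ₂, lt_min hδ₁ hδ₂, ?_⟩
    intro s hs hds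
    simp only [Set.mem_Ici] at hs
    obtain ⟨hfspos, hfse⟩ := hfspec s hs
    have hd1 : dist s s₀ < δ₁ := lt_of_lt_of_le hds (min_le_left _ _)
    have hd2 : dist s s₀ < δ₂ := lt_of_lt_of_le hds (min_le_right _ _)
    have hus : a - α * φ (a + s) < 0 := by
      have := hδ₁h (Set.mem_Ici.mpr hs) hd1
      rw [Real.dist_eq] at this
      have := abs_lt.mp this
      linarith [this.1, this.2]
    have hvs : 0 < c - α * φ (c + s) := by
      have := hδ₂h (Set.mem_Ici.mpr hs) hd2
      rw [Real.dist_eq] at this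
      have := abs_lt.mp this
      linarith [this.1, this.2]
    -- deduce a < f s < c using strict monotonicity of g_s
    have hgt : a < f s := by
      by_contra hle
      push_neg at hle
      -- f s ≤ a ⟹ φ(f s + s) ≥ φ(a + s) ⟹ f s = αφ(f s+s) ≥ αφ(a+s) > a ≥ f s
      rcases eq_or_lt_of_le hle with heq | hlt
      · rw [heq] at hfse; linarith
      · have h1 : φ (a + s) < φ (f s + s) :=
          hφanti (Set.mem_Ici.mpr (add_nonneg hfspos.le hs))
            (Set.mem_Ici.mpr (add_nonneg ha0.le hs)) (by linarith)
        have h2 := mul_lt_mul_of_pos_left h1 hα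
        linarith
    have hlt : f s < c := by
      by_contra hle
      push_neg at hle
      rcases eq_or_lt_of_le hle with heq | hlt
      · rw [← heq] at hfse; linarith
      · have h1 : φ (f s + s) < φ (c + s) :=
          hφanti (Set.mem_Ici.mpr (add_nonneg (by linarith) hs))
            (Set.mem_Ici.mpr (add_nonneg hfspos.le hs)) (by linarith)
        have h2 := mul_lt_mul_of_pos_left h1 hα
        linarith
    rw [Real.dist_eq, abs_lt]
    constructor
    · have : min ε x₀ ≤ ε := min_le_left _ _
      simp only [hadef] at hgt
      linarith
    · simp only [hcdef] at hlt
      linarith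
end

section
/- Let φ_1, φ_2, φ_3: [0,∞) → (0,∞) be continuous and strictly decreasing and let α_1, α_2, α_3 > 0. For each j ∈ {1,2,3}, let x_j(s) denote the unique nonnegative solution of x = α_j · φ_j(x + s) (which exists for every s ≥ 0 and depends continuously and strictly decreasingly on s). Then there exists a unique S > 0 satisfying S = x_1(S) + x_2(S) + x_3(S). -/
/-! The map `g s = x₀ s + x₁ s + x₂ s` is positive, continuous and decreasing on `[0, ∞)`, so
`s ↦ s - g s` is continuous and strictly increasing there, negative at `0` and nonnegative at
`g 0`; by the intermediate value theorem it has exactly one zero. -/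

open Set

theorem exists_eq_of_antitoneOn_Ici {g : ℝ → ℝ} (hcont : ContinuousOn g (Ici 0))
    (hanti : AntitoneOn g (Ici 0)) (hg₀ : 0 ≤ g 0) : ∃ S, 0 ≤ S ∧ S = g S := by
  have hgg₀ : g (g 0) ≤ g 0 := hanti self_mem_Ici hg₀ hg₀
  have hzero : (0 : ℝ) ∈ Icc (0 - g 0) (g 0 - g (g 0)) := ⟨by linarith, by linarith⟩
  obtain ⟨S, hS, hSg⟩ := intermediate_value_Icc hg₀
    (continuousOn_id.sub (hcont.mono Icc_subset_Ici_self)) hzero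
  exact ⟨S, hS.1, sub_eq_zero.mp hSg⟩

theorem AntitoneOn.strictMonoOn_id_sub {g : ℝ → ℝ} {s : Set ℝ} (hanti : AntitoneOn g s) :
    StrictMonoOn (fun t => t - g t) s :=
  fun _ ha _ hb hab => by linarith [hanti ha hb hab.le]

theorem existsUnique_pos_eq_of_antitoneOn_Ici {g : ℝ → ℝ} (hcont : ContinuousOn g (Ici 0))
    (hanti : AntitoneOn g (Ici 0)) (hpos : ∀ s, 0 ≤ s → 0 < g s) :
    ∃! S, 0 < S ∧ S = g S := by
  obtain ⟨S, hS, hSg⟩ := exists_eq_of_antitoneOn_Ici hcont hanti (hpos 0 le_rfl).le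
  refine ⟨S, ⟨hSg ▸ hpos S hS, hSg⟩, fun T ⟨hT, hTg⟩ => ?_⟩
  exact hanti.strictMonoOn_id_sub.injOn (mem_Ici.mpr hT.le) hS (by linarith)

theorem stmt11_general (φ : Fin 3 → ℝ → ℝ) (α : Fin 3 → ℝ)
    (x : Fin 3 → ℝ → ℝ)
    (hx : ∀ j : Fin 3, ∀ s : ℝ, 0 ≤ s →
      (0 < x j s ∧ x j s = α j * φ j (x j s + s) ∧
        ∀ y : ℝ, 0 ≤ y → y = α j * φ j (y + s) → y = x j s))
    (hxanti : ∀ j, StrictAntiOn (x j) (Set.Ici 0))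
    (hxcont : ∀ j, ContinuousOn (x j) (Set.Ici 0)) :
    ∃! S : ℝ, 0 < S ∧ S = x 0 S + x 1 S + x 2 S :=
  existsUnique_pos_eq_of_antitoneOn_Ici
    (((hxcont 0).add (hxcont 1)).add (hxcont 2))
    (((hxanti 0).antitoneOn.add (hxanti 1).antitoneOn).add (hxanti 2).antitoneOn)
    fun s hs => by linarith [(hx 0 s hs).1, (hx 1 s hs).1, (hx 2 s hs).1]

theorem stmt11 (φ : Fin 3 → ℝ → ℝ) (α : Fin 3 → ℝ) (hα : ∀ j, 0 < α j)
    (hφpos : ∀ j x, 0 ≤ x → 0 < φ j x)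
    (hφcont : ∀ j, ContinuousOn (φ j) (Set.Ici 0))
    (hφanti : ∀ j, StrictAntiOn (φ j) (Set.Ici 0))
    (x : Fin 3 → ℝ → ℝ)
    (hx : ∀ j : Fin 3, ∀ s : ℝ, 0 ≤ s →
      (0 < x j s ∧ x j s = α j * φ j (x j s + s) ∧
        ∀ y : ℝ, 0 ≤ y → y = α j * φ j (y + s) → y = x j s))
    (hxanti : ∀ j, StrictAntiOn (x j) (Set.Ici 0))
    (hxcont : ∀ j, ContinuousOn (x j) (Set.Ici 0)) :
    ∃! S : ℝ, 0 < S ∧ S = x 0 S + x 1 S + x 2 S :=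
  stmt11_general φ α x hx hxanti hxcont
end

section
/- (Triangular network, reduced fixed point system.) Let φ_1, φ_2, φ_3: [0,∞) → (0,∞) be continuous and strictly decreasing and let α_1, α_2, α_3 > 0. Then the system of equations y_j = α_{j−1} · φ_j( y_{j−1} + 2 y_j + y_{j+1} ), for j ∈ {1,2,3} with indices taken modulo 3 (so that index 0 means 3 and index 4 means 1), has exactly one solution (y_1, y_2, y_3) ∈ [0,∞)^3, and each y_j is strictly positive. -/
/-!
Writing `s = ∑ i, y i`, the argument of `φ_j` in the equation for `y_j` is `s + y_j`, so every
coordinate solves a scalar equation `y = c φ (s + y)` whose unique nonnegative solution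
`L (s) > 0` is a continuous, antitone function of `s ≥ 0`: it is `U(s) - s`, where `U` is the
inverse of the increasing homeomorphism `u ↦ u - c φ (u⁺)` of `ℝ`. Solutions of the system are
then exactly the vectors `(L_j (s))_j` with `s` a fixed point of `s ↦ ∑ j, L_j (s)`; this map
sends `[0, ∑ j, c_j φ_j (0)]` into itself, so a fixed point exists, and it is unique because the
map is antitone.
-/

open Filter Set

structure IsLossProfile (φ : ℝ → ℝ) : Prop where
  pos : ∀ x, 0 ≤ x → 0 < φ x
  continuousOn : ContinuousOn φ (Ici 0)
  strictAntiOn : StrictAntiOn φ (Ici 0)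

-- `φ` is only controlled on `[0, ∞)`, hence the truncation `max u 0`.
def shiftMap (c : ℝ) (φ : ℝ → ℝ) (u : ℝ) : ℝ := u - c * φ (max u 0)

theorem shiftMap_of_nonneg {c : ℝ} {φ : ℝ → ℝ} {u : ℝ} (hu : 0 ≤ u) :
    shiftMap c φ u = u - c * φ u := by
  rw [shiftMap, max_eq_left hu]

theorem shiftMap_lt {c : ℝ} {φ : ℝ → ℝ} (hc : 0 < c) (hpos : ∀ x, 0 ≤ x → 0 < φ x) (u : ℝ) :
    shiftMap c φ u < u := by
  have := mul_pos hc (hpos _ (le_max_right u 0))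
  rw [shiftMap]
  linarith

theorem sub_le_shiftMap {c : ℝ} {φ : ℝ → ℝ} (hc : 0 ≤ c) (hanti : AntitoneOn φ (Ici 0)) (u : ℝ) :
    u - c * φ 0 ≤ shiftMap c φ u := by
  have := mul_le_mul_of_nonneg_left
    (hanti self_mem_Ici (mem_Ici.2 (le_max_right u 0)) (le_max_right u 0)) hc
  rw [shiftMap]
  linarith

theorem strictMono_shiftMap {c : ℝ} {φ : ℝ → ℝ} (hc : 0 ≤ c) (hanti : AntitoneOn φ (Ici 0)) :
    StrictMono (shiftMap c φ) := by
  intro u v huv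
  have := mul_le_mul_of_nonneg_left (hanti (mem_Ici.2 (le_max_right u 0))
    (mem_Ici.2 (le_max_right v 0)) (max_le_max_right 0 huv.le)) hc
  rw [shiftMap, shiftMap]
  linarith

theorem continuous_shiftMap {c : ℝ} {φ : ℝ → ℝ} (hcont : ContinuousOn φ (Ici 0)) :
    Continuous (shiftMap c φ) :=
  continuous_id.sub <| continuous_const.mul <|
    hcont.comp_continuous (continuous_id.max continuous_const) fun u => mem_Ici.2 (le_max_right u 0)

namespace IsLossProfile

variable {φ : ℝ → ℝ} {c : ℝ} (hφ : IsLossProfile φ) (hc : 0 < c)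
include hφ hc

theorem surjective_shiftMap : Function.Surjective (shiftMap c φ) :=
  (continuous_shiftMap hφ.continuousOn).surjective
    (tendsto_atTop_mono (sub_le_shiftMap hc.le hφ.strictAntiOn.antitoneOn)
      (tendsto_atTop_add_const_right _ _ tendsto_id))
    (tendsto_atBot_mono (fun u => (shiftMap_lt hc hφ.pos u).le) tendsto_id)

noncomputable def shiftIso : ℝ ≃o ℝ :=
  StrictMono.orderIsoOfSurjective _ (strictMono_shiftMap hc.le hφ.strictAntiOn.antitoneOn)
    (hφ.surjective_shiftMap hc)

/-- For `s ≥ 0`, the unique `y ≥ 0` with `y = c * φ (s + y)`. -/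
noncomputable def load (s : ℝ) : ℝ := (hφ.shiftIso hc).symm s - s

theorem load_eq_mul_max (s : ℝ) : hφ.load hc s = c * φ (max (s + hφ.load hc s) 0) := by
  have h := StrictMono.orderIsoOfSurjective_self_symm_apply _
    (strictMono_shiftMap hc.le hφ.strictAntiOn.antitoneOn) (hφ.surjective_shiftMap hc) s
  rw [shiftMap] at h
  rw [load, shiftIso, add_sub_cancel]
  linarith

theorem load_pos (s : ℝ) : 0 < hφ.load hc s := by
  rw [hφ.load_eq_mul_max hc]
  exact mul_pos hc (hφ.pos _ (le_max_right _ _))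

theorem load_eq {s : ℝ} (hs : 0 ≤ s) : hφ.load hc s = c * φ (s + hφ.load hc s) := by
  conv_lhs => rw [hφ.load_eq_mul_max hc, max_eq_left (by linarith [hφ.load_pos hc s])]

theorem load_eq_of_eq {s y : ℝ} (hs : 0 ≤ s) (hy : 0 ≤ y) (h : y = c * φ (s + y)) :
    hφ.load hc s = y := by
  suffices (hφ.shiftIso hc).symm s = s + y by rw [load, this, add_sub_cancel_left]
  rw [OrderIso.symm_apply_eq, shiftIso, StrictMono.coe_orderIsoOfSurjective,
    shiftMap_of_nonneg (add_nonneg hs hy)]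
  linarith

theorem continuous_load : Continuous (hφ.load hc) :=
  (hφ.shiftIso hc).symm.continuous.sub continuous_id

theorem load_le {s : ℝ} (hs : 0 ≤ s) : hφ.load hc s ≤ c * φ 0 := by
  have hsum : 0 ≤ s + hφ.load hc s := add_nonneg hs (hφ.load_pos hc s).le
  rw [hφ.load_eq hc hs]
  exact mul_le_mul_of_nonneg_left
    (hφ.strictAntiOn.antitoneOn self_mem_Ici (mem_Ici.2 hsum) hsum) hc.le

-- A larger `s` with a larger load would give a larger argument of `φ`, hence a smaller load.
theorem antitoneOn_load : AntitoneOn (hφ.load hc) (Ici 0) := by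
  intro s hs t ht hst
  by_contra! hlt
  have hlt' : hφ.load hc t < hφ.load hc s := by
    rw [hφ.load_eq hc hs, hφ.load_eq hc ht]
    refine mul_lt_mul_of_pos_left (hφ.strictAntiOn ?_ ?_ (by linarith)) hc
    · exact mem_Ici.2 (add_nonneg hs (hφ.load_pos hc s).le)
    · exact mem_Ici.2 (add_nonneg (le_trans hs hst) (hφ.load_pos hc t).le)
  exact lt_asymm hlt hlt'

end IsLossProfile

theorem AntitoneOn.eq_of_isFixedPt {α : Type*} [LinearOrder α] {f : α → α} {s : Set α}
    (hf : AntitoneOn f s) {a b : α} (ha : a ∈ s) (hb : b ∈ s) (hfa : Function.IsFixedPt f a)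
    (hfb : Function.IsFixedPt f b) : a = b := by
  rcases le_total a b with hab | hba
  · exact le_antisymm hab (hfb ▸ hfa ▸ hf ha hb hab)
  · exact le_antisymm (hfb ▸ hfa ▸ hf hb ha hba) hba

theorem existsUnique_nonneg_load_solution {ι : Type*} [Fintype ι] {φ : ι → ℝ → ℝ} {c : ι → ℝ}
    (hc : ∀ j, 0 < c j) (hφ : ∀ j, IsLossProfile (φ j)) :
    ∃! y : ι → ℝ, (∀ j, 0 ≤ y j) ∧ ∀ j, y j = c j * φ j (∑ i, y i + y j) := by
  set L : ι → ℝ → ℝ := fun j => (hφ j).load (hc j)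
  set T : ℝ → ℝ := fun s => ∑ j, L j s
  have hsol : ∀ y : ι → ℝ, (∀ j, 0 ≤ y j) → (∀ j, y j = c j * φ j (∑ i, y i + y j)) →
      y = fun j => L j (∑ i, y i) := fun y hy heq =>
    funext fun j => ((hφ j).load_eq_of_eq (hc j) (Finset.sum_nonneg fun i _ => hy i) (hy j)
      (heq j)).symm
  have hT : Continuous T := continuous_finsetSum _ fun j _ => (hφ j).continuous_load (hc j)
  have hT_maps : MapsTo T (Icc 0 (∑ j, c j * φ j 0)) (Icc 0 (∑ j, c j * φ j 0)) :=
    fun s hs => ⟨Finset.sum_nonneg fun j _ => ((hφ j).load_pos (hc j) s).le,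
      Finset.sum_le_sum fun j _ => (hφ j).load_le (hc j) hs.1⟩
  have hT_anti : AntitoneOn T (Ici 0) := fun s hs t ht hst =>
    Finset.sum_le_sum fun j _ => (hφ j).antitoneOn_load (hc j) hs ht hst
  obtain ⟨s, hs, hTs⟩ := exists_mem_Icc_isFixedPt_of_mapsTo hT.continuousOn
    (Finset.sum_nonneg fun j _ => (mul_pos (hc j) ((hφ j).pos 0 le_rfl)).le) hT_maps
  refine ⟨fun j => L j s, ⟨fun j => ((hφ j).load_pos (hc j) s).le, fun j => ?_⟩, ?_⟩
  · rw [show ∑ i, L i s = s from hTs]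
    exact (hφ j).load_eq (hc j) hs.1
  · rintro y ⟨hy, heq⟩
    have hy_sum : ∑ i, y i = s := by
      refine hT_anti.eq_of_isFixedPt (Finset.sum_nonneg fun i _ => hy i) hs.1 ?_ hTs
      exact Finset.sum_congr rfl fun j _ => (congrFun (hsol y hy heq) j).symm
    rw [hsol y hy heq, hy_sum]

theorem sum_neighbors_fin_three (y : Fin 3 → ℝ) (j : Fin 3) :
    y (j - 1) + 2 * y j + y (j + 1) = ∑ i, y i + y j := by
  fin_cases j <;> simp [Fin.sum_univ_three, show (-1 : Fin 3) = 2 from rfl] <;> ring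

theorem stmt12 (φ : Fin 3 → ℝ → ℝ) (α : Fin 3 → ℝ) (hα : ∀ j, 0 < α j)
    (hφpos : ∀ j x, 0 ≤ x → 0 < φ j x)
    (hφcont : ∀ j, ContinuousOn (φ j) (Set.Ici 0))
    (hφanti : ∀ j, StrictAntiOn (φ j) (Set.Ici 0)) :
    (∃! y : Fin 3 → ℝ, (∀ j, 0 ≤ y j) ∧
      ∀ j : Fin 3, y j = α (j - 1) * φ j (y (j - 1) + 2 * y j + y (j + 1))) ∧
    ∀ y : Fin 3 → ℝ, (∀ j, 0 ≤ y j) →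
      (∀ j : Fin 3, y j = α (j - 1) * φ j (y (j - 1) + 2 * y j + y (j + 1))) →
      ∀ j, 0 < y j := by
  have hφ : ∀ j, IsLossProfile (φ j) := fun j => ⟨hφpos j, hφcont j, hφanti j⟩
  simp_rw [sum_neighbors_fin_three]
  refine ⟨existsUnique_nonneg_load_solution (c := fun j => α (j - 1)) (fun j => hα _) hφ,
    fun y hy heq j => ?_⟩
  rw [heq j]
  exact mul_pos (hα _) (hφpos j _ (add_nonneg (Finset.sum_nonneg fun i _ => hy i) (hy j)))
end
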